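/- The only positive fixed point of S_{2,-3} is 1, and the only cycle of length greater than 1 is (2, 4, 6): S_{2,-3}(2)=4, S_{2,-3}(4)=6, S_{2,-3}(6)=2. -/

import Mathlib

/-!
Splitting off the lowest base `-3` digit, `a = a % -3 + (-3) * (a / -3)`, gives the recursion
`S a = (a % -3) ^ 2 + S (a / -3)` for `a ≠ 0`. As `|a / -3| ≤ (|a| + 2) / 3`, it yields
`S a ≤ |a| + 4` for all `a`, hence `S a ≤ 8 + a / 3 < a` once `a ≥ 13`. Every positive orbit
therefore descends into `[1, 12]`, and from there it enters the invariant set `{1, 2, 4, 6}`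
within four steps. A periodic point recurs after arbitrarily many steps, so it lies in that set.
-/

/-- The value of a digit list `L = [a₀, a₁, …, aₙ]` in base `b`: `Σ aᵢ bⁱ`. -/
def baseVal (b : ℤ) : List ℤ → ℤ
  | [] => 0
  | d :: L => d + b * baseVal b L

/-- `L` is the base-`b` digit expansion of `a`: digits in `[0, |b|-1]`,
leading (last) digit nonzero, with value `a`. -/
def IsDigitExpansion (b a : ℤ) (L : List ℤ) : Prop :=
  (∀ d ∈ L, 0 ≤ d ∧ d ≤ |b| - 1) ∧ L ≠ [] ∧ L.getLast! ≠ 0 ∧ baseVal b L = a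

/-- `S` is the function `S_{e,b}` sending `a` to the sum of `e`-th powers of its
base-`b` digits (and `0` to `0`). -/
def IsPowSumFun (e : ℕ) (b : ℤ) (S : ℤ → ℤ) : Prop :=
  S 0 = 0 ∧ ∀ a L, IsDigitExpansion b a L → S a = (L.map (· ^ e)).sum

theorem Function.IsPeriodicPt.mem_of_iterate_mem {α : Type*} {f : α → α} {s : Set α} {n k : ℕ}
    {x : α} (hx : IsPeriodicPt f n x) (hn : 0 < n) (hs : Set.MapsTo f s s) (hk : f^[k] x ∈ s) :
    x ∈ s := by
  have hsplit : n * k = (n * k - k) + k := (Nat.sub_add_cancel (Nat.le_mul_of_pos_left k hn)).symm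
  rw [← (hx.mul_const k).eq, hsplit, Function.iterate_add_apply]
  exact hs.iterate _ hk

namespace IsDigitExpansion

variable {b a : ℤ} {L : List ℤ}

theorem singleton (hb : b ≠ 0) (ha : a ≠ 0) (hq : a / b = 0) :
    IsDigitExpansion b a [a % b] := by
  have hr : a % b = a := by simpa [hq] using Int.emod_add_mul_ediv a b
  refine ⟨?_, List.cons_ne_nil _ _, ?_, ?_⟩
  · simp only [List.mem_singleton, forall_eq]
    exact ⟨Int.emod_nonneg a hb, by linarith [Int.emod_lt_abs a hb]⟩
  · simpa [hr] using ha
  · simp [baseVal, hr]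

theorem cons (hb : b ≠ 0) (h : IsDigitExpansion b (a / b) L) :
    IsDigitExpansion b a (a % b :: L) := by
  obtain ⟨hdig, hne, hlast, hval⟩ := h
  refine ⟨?_, List.cons_ne_nil _ _, ?_, ?_⟩
  · simp only [List.mem_cons, forall_eq_or_imp]
    exact ⟨⟨Int.emod_nonneg a hb, by linarith [Int.emod_lt_abs a hb]⟩, hdig⟩
  · simpa [List.getLast?_cons_of_ne_nil hne] using hlast
  · simp [baseVal, hval, Int.emod_add_mul_ediv]

theorem sum_map_pow_pos (h : IsDigitExpansion b a L) (e : ℕ) : 0 < (L.map (· ^ e)).sum := by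
  obtain ⟨hdig, hne, hlast, -⟩ := h
  have hmem : L.getLast! ∈ L := by simp [List.getLast?_eq_some_getLast hne]
  have hpos : 0 < L.getLast! := lt_of_le_of_ne (hdig _ hmem).1 (Ne.symm hlast)
  calc 0 < L.getLast! ^ e := pow_pos hpos e
    _ ≤ (L.map (· ^ e)).sum :=
      List.single_le_sum (by simpa using fun d hd => pow_nonneg (hdig d hd).1 e) _
        (List.mem_map_of_mem hmem)

end IsDigitExpansion

-- `|a|` alone is not a termination measure for `a ↦ a / b`, since `-1 / b = 1`.
theorem Int.two_mul_natAbs_ediv_add_lt_of_le_neg_two {a b : ℤ} (hb : b ≤ -2) (hq : a / b ≠ 0) :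
    2 * (a / b).natAbs + (if a / b < 0 then 1 else 0) < 2 * a.natAbs + if a < 0 then 1 else 0 := by
  have hdiv := Int.emod_add_mul_ediv a b
  have hr0 := Int.emod_nonneg a (b := b) (by omega)
  have hr1 := Int.emod_lt_abs a (b := b) (by omega)
  rw [abs_of_neg (by omega)] at hr1
  rcases lt_or_gt_of_ne hq with hneg | hpos
  · have : -2 * (a / b) ≤ b * (a / b) := by nlinarith
    split_ifs <;> omega
  · have : b * (a / b) ≤ b - 2 * (a / b) + 2 := by nlinarith
    split_ifs <;> omega

theorem exists_isDigitExpansion {b : ℤ} (hb : b ≤ -2) (a : ℤ) (ha : a ≠ 0) :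
    ∃ L, IsDigitExpansion b a L := by
  by_cases hq : a / b = 0
  · exact ⟨_, .singleton (by omega) ha hq⟩
  · obtain ⟨L, hL⟩ := exists_isDigitExpansion hb (a / b) hq
    exact ⟨_, hL.cons (by omega)⟩
termination_by 2 * a.natAbs + if a < 0 then 1 else 0
decreasing_by exact Int.two_mul_natAbs_ediv_add_lt_of_le_neg_two hb hq

namespace IsPowSumFun

variable {e : ℕ} {b : ℤ} {S : ℤ → ℤ}

theorem apply_of_ne_zero (hS : IsPowSumFun e b S) (hb : b ≤ -2) {a : ℤ} (ha : a ≠ 0) :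
    S a = (a % b) ^ e + S (a / b) := by
  by_cases hq : a / b = 0
  · rw [hS.2 a _ (.singleton (by omega) ha hq), hq, hS.1]
    simp
  · obtain ⟨L, hL⟩ := exists_isDigitExpansion hb _ hq
    rw [hS.2 a _ (hL.cons (by omega)), hS.2 _ L hL]
    simp

theorem pos (hS : IsPowSumFun e b S) (hb : b ≤ -2) {a : ℤ} (ha : a ≠ 0) : 0 < S a := by
  obtain ⟨L, hL⟩ := exists_isDigitExpansion hb a ha
  rw [hS.2 a L hL]
  exact hL.sum_map_pow_pos e

theorem le_natAbs_add_four (hS : IsPowSumFun 2 (-3) S) (a : ℤ) : S a ≤ a.natAbs + 4 := by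
  induction hn : a.natAbs using Nat.strong_induction_on generalizing a with
  | _ n ih =>
    subst hn
    by_cases hsmall : a.natAbs ≤ 5
    · obtain ⟨hlo, hhi⟩ : -5 ≤ a ∧ a ≤ 5 := by omega
      interval_cases a <;> simp [hS.apply_of_ne_zero, hS.1]
    · have hq : ((a / -3).natAbs : ℤ) + 4 ≤ a.natAbs ∧ 0 ≤ a % -3 ∧ a % -3 ≤ 2 := by
        simp only [Int.ediv_neg, Int.emod_neg]; omega
      have := ih _ (by omega) (a / -3) rfl
      rw [hS.apply_of_ne_zero (by norm_num) (by omega)]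
      nlinarith

theorem lt_self_of_thirteen_le (hS : IsPowSumFun 2 (-3) S) {a : ℤ} (ha : 13 ≤ a) : S a < a := by
  have hq : ((a / -3).natAbs : ℤ) + 9 ≤ a ∧ 0 ≤ a % -3 ∧ a % -3 ≤ 2 := by
    simp only [Int.ediv_neg, Int.emod_neg]; omega
  have := hS.le_natAbs_add_four (a / -3)
  rw [hS.apply_of_ne_zero (by norm_num) (by omega)]
  nlinarith

theorem exists_iterate_mem_cycle (hS : IsPowSumFun 2 (-3) S) {a : ℤ} (ha : 0 < a) :
    ∃ k, S^[k] a ∈ ({1, 2, 4, 6} : Set ℤ) := by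
  induction hn : a.toNat using Nat.strong_induction_on generalizing a with
  | _ n ih =>
    subst hn
    by_cases hsmall : a ≤ 12
    -- The longest path from `[1, 12]` into the cycle is `7 ↦ 3 ↦ 5 ↦ 9 ↦ 1`.
    · refine ⟨4, ?_⟩
      interval_cases a <;> simp [hS.apply_of_ne_zero, hS.1]
    · obtain ⟨k, hk⟩ := ih _ (by have := hS.lt_self_of_thirteen_le (by omega : 13 ≤ a); omega)
        (hS.pos (by norm_num) ha.ne') rfl
      exact ⟨k + 1, hk⟩

end IsPowSumFun

theorem cycles_base_neg_three (S : ℤ → ℤ) (hS : IsPowSumFun 2 (-3) S) :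
    (∀ a : ℤ, 0 < a → (S a = a ↔ a = 1)) ∧
      S 2 = 4 ∧ S 4 = 6 ∧ S 6 = 2 ∧
      (∀ a : ℤ, 0 < a → ∀ m : ℕ, 1 ≤ m → S^[m] a = a →
        a = 1 ∨ a = 2 ∨ a = 4 ∨ a = 6) := by
  have h1 : S 1 = 1 := by simp [hS.apply_of_ne_zero, hS.1]
  have h2 : S 2 = 4 := by simp [hS.apply_of_ne_zero, hS.1]
  have h4 : S 4 = 6 := by simp [hS.apply_of_ne_zero, hS.1]
  have h6 : S 6 = 2 := by simp [hS.apply_of_ne_zero, hS.1]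
  have hcycle : Set.MapsTo S {1, 2, 4, 6} {1, 2, 4, 6} := by
    rintro a (rfl | rfl | rfl | rfl) <;> simp [h1, h2, h4, h6]
  have hperiodic : ∀ a : ℤ, 0 < a → ∀ m : ℕ, 1 ≤ m → S^[m] a = a →
      a = 1 ∨ a = 2 ∨ a = 4 ∨ a = 6 := fun a ha m hm hper => by
    obtain ⟨k, hk⟩ := hS.exists_iterate_mem_cycle ha
    simpa using Function.IsPeriodicPt.mem_of_iterate_mem hper hm hcycle hk
  refine ⟨fun a ha => ⟨fun hfix => ?_, fun ha1 => ha1 ▸ h1⟩, h2, h4, h6, hperiodic⟩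
  rcases hperiodic a ha 1 le_rfl hfix with rfl | rfl | rfl | rfl <;> simp_all
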